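/- Let Γ be a finite simplicial graph and 𝒢 a collection of nontrivial finitely generated groups indexed by V(Γ), each with a fixed finite generating set, and let ‖·‖ denote the resulting word length on the graph product Γ𝒢. For every a ∈ Γ𝒢 there exist b, g ∈ Γ𝒢 such that a = g b g⁻¹, b is graphically cyclically reduced, ‖b‖ ≤ ‖a‖, and ‖g‖ ≤ ‖a‖/2. -/

import Mathlib

open Monoid

def graphProductRels {V : Type*} (Γ : SimpleGraph V) (G : V → Type*) [∀ v, Group (G v)] :
    Set (Monoid.CoprodI G) :=
  {x | ∃ (u v : V) (g : G u) (h : G v), Γ.Adj u v ∧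
    x = CoprodI.of g * CoprodI.of h * (CoprodI.of g)⁻¹ * (CoprodI.of h)⁻¹}

def GraphProduct {V : Type*} (Γ : SimpleGraph V) (G : V → Type*) [∀ v, Group (G v)] : Type _ :=
  Monoid.CoprodI G ⧸ Subgroup.normalClosure (graphProductRels Γ G)

instance {V : Type*} (Γ : SimpleGraph V) (G : V → Type*) [∀ v, Group (G v)] :
    Group (GraphProduct Γ G) := by
  unfold GraphProduct; infer_instance

/-- The canonical map from a vertex group to the graph product. -/
def GraphProduct.of {V : Type*} (Γ : SimpleGraph V) (G : V → Type*) [∀ v, Group (G v)] {u : V} :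
    G u →* GraphProduct Γ G :=
  (QuotientGroup.mk' (Subgroup.normalClosure (graphProductRels Γ G))).comp CoprodI.of

/-- The element of the graph product represented by a word over the union of vertex groups. -/
def wordProd {V : Type*} (Γ : SimpleGraph V) (G : V → Type*) [∀ v, Group (G v)]
    (l : List (Σ u, G u)) : GraphProduct Γ G :=
  (l.map fun s => GraphProduct.of Γ G s.2).prod

/-- A word over the union of the vertex groups is graphically reduced if all its syllables
are nontrivial and any two syllables in the same vertex group are separated by a syllable
in a non-adjacent vertex group. -/
def GraphicallyReduced {V : Type*} (Γ : SimpleGraph V) (G : V → Type*) [∀ v, Group (G v)]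
    (l : List (Σ u, G u)) : Prop :=
  (∀ s ∈ l, s.2 ≠ (1 : G s.1)) ∧
  ∀ (i j : ℕ) (hi : i < l.length) (hj : j < l.length), i < j →
    (l.get ⟨i, hi⟩).1 = (l.get ⟨j, hj⟩).1 →
    ∃ (k : ℕ) (hk : k < l.length), i < k ∧ k < j ∧
      ¬ Γ.Adj (l.get ⟨i, hi⟩).1 (l.get ⟨k, hk⟩).1

/-- Swapping two consecutive syllables lying in adjacent vertex groups. -/
def AdjSwap {V : Type*} (Γ : SimpleGraph V) (G : V → Type*) [∀ v, Group (G v)]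
    (l l' : List (Σ u, G u)) : Prop :=
  ∃ (w₁ w₂ : List (Σ u, G u)) (s t : Σ u, G u), Γ.Adj s.1 t.1 ∧
    l = w₁ ++ s :: t :: w₂ ∧ l' = w₁ ++ t :: s :: w₂
/-- Graphically cyclically reduced words. -/
def GraphCyclicallyReduced {V : Type*} (Γ : SimpleGraph V) (G : V → Type*) [∀ v, Group (G v)]
    (l : List (Σ u, G u)) : Prop :=
  GraphicallyReduced Γ G l ∧
  ¬ ∃ (i j : ℕ) (hi : i < l.length) (hj : j < l.length), i < j ∧
      (l.get ⟨i, hi⟩).1 = (l.get ⟨j, hj⟩).1 ∧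
      (∀ (k : ℕ) (hk : k < l.length), k < i → Γ.Adj (l.get ⟨i, hi⟩).1 (l.get ⟨k, hk⟩).1) ∧
      (∀ (k : ℕ) (hk : k < l.length), j < k → Γ.Adj (l.get ⟨j, hj⟩).1 (l.get ⟨k, hk⟩).1)

/-- Word length with respect to a generating set. -/
noncomputable def wlen {H : Type*} [Group H] (S : Set H) (g : H) : ℕ :=
  sInf {n | ∃ l : List H, (∀ x ∈ l, x ∈ S ∨ x⁻¹ ∈ S) ∧ l.prod = g ∧ l.length = n}

/-- Conjugacy length function with respect to a generating set. -/
noncomputable def CLF {H : Type*} [Group H] (S : Set H) (n : ℕ) : ℕ∞ :=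
  ⨆ (a : H) (b : H) (_ : (∃ c, c * a * c⁻¹ = b) ∧ wlen S a + wlen S b ≤ n),
    ((sInf {k | ∃ c, c * a * c⁻¹ = b ∧ wlen S c = k} : ℕ) : ℕ∞)

/-- The generating set of a graph product induced by generating sets of the vertex groups. -/
noncomputable def genSet {V : Type*} (Γ : SimpleGraph V) (G : V → Type*) [∀ v, Group (G v)]
    (X : ∀ v, Set (G v)) : Set (GraphProduct Γ G) :=
  ⋃ u : V, ⇑(GraphProduct.of Γ G (u := u)) '' X u

/-! ### Auxiliary infrastructure -/

section WlenBasics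

variable {H : Type*} [Group H] {S : Set H}

theorem wlen_le {x : H} {l : List H} (hl : ∀ y ∈ l, y ∈ S ∨ y⁻¹ ∈ S) (hp : l.prod = x) :
    wlen S x ≤ l.length :=
  Nat.sInf_le ⟨l, hl, hp, rfl⟩

theorem exists_word_of_closure (hS : Subgroup.closure S = ⊤) (x : H) :
    ∃ l : List H, (∀ y ∈ l, y ∈ S ∨ y⁻¹ ∈ S) ∧ l.prod = x := by
  have hx : x ∈ Subgroup.closure S := hS ▸ Subgroup.mem_top x
  induction hx using Subgroup.closure_induction with
  | mem y hy => exact ⟨[y], by simp [hy], by simp⟩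
  | one => exact ⟨[], by simp, by simp⟩
  | mul y z _ _ ihy ihz =>
    obtain ⟨l₁, h1, h2⟩ := ihy
    obtain ⟨l₂, h3, h4⟩ := ihz
    exact ⟨l₁ ++ l₂, by intro w hw; rcases List.mem_append.1 hw with h | h; exacts [h1 w h, h3 w h],
      by simp [h2, h4]⟩
  | inv y _ ih =>
    obtain ⟨l, h1, h2⟩ := ih
    refine ⟨(l.map fun w => w⁻¹).reverse, ?_, by rw [← h2, List.prod_inv_reverse]⟩
    intro w hw
    simp only [List.mem_reverse, List.mem_map] at hw
    obtain ⟨w', hw', rfl⟩ := hw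
    rcases h1 w' hw' with h | h
    · exact Or.inr (by simpa using h)
    · exact Or.inl h

theorem exists_min_word (hS : Subgroup.closure S = ⊤) (x : H) :
    ∃ l : List H, (∀ y ∈ l, y ∈ S ∨ y⁻¹ ∈ S) ∧ l.prod = x ∧ l.length = wlen S x := by
  obtain ⟨l, h1, h2⟩ := exists_word_of_closure hS x
  have hne : {n | ∃ l : List H, (∀ y ∈ l, y ∈ S ∨ y⁻¹ ∈ S) ∧ l.prod = x ∧ l.length = n}.Nonempty :=
    ⟨l.length, l, h1, h2, rfl⟩
  have := Nat.sInf_mem hne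
  obtain ⟨l', h1', h2', h3'⟩ := this
  exact ⟨l', h1', h2', h3'⟩

theorem wlen_one_eq_zero : wlen S (1 : H) = 0 :=
  Nat.eq_zero_of_le_zero (wlen_le (l := []) (by simp) (by simp))

theorem wlen_mul_le (hS : Subgroup.closure S = ⊤) (x y : H) :
    wlen S (x * y) ≤ wlen S x + wlen S y := by
  obtain ⟨l₁, h1, h2, h3⟩ := exists_min_word hS x
  obtain ⟨l₂, h4, h5, h6⟩ := exists_min_word hS y
  have := wlen_le (x := x * y) (l := l₁ ++ l₂)
    (by intro w hw; rcases List.mem_append.1 hw with h | h; exacts [h1 w h, h4 w h])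
    (by simp [h2, h5])
  simpa [h3, h6] using this

theorem wlen_inv (x : H) : wlen S x⁻¹ = wlen S x := by
  have key : ∀ z : H, ∀ n, (∃ l : List H, (∀ y ∈ l, y ∈ S ∨ y⁻¹ ∈ S) ∧ l.prod = z ∧ l.length = n) →
      (∃ l : List H, (∀ y ∈ l, y ∈ S ∨ y⁻¹ ∈ S) ∧ l.prod = z⁻¹ ∧ l.length = n) := by
    rintro z n ⟨l, h1, rfl, rfl⟩
    refine ⟨(l.map fun w => w⁻¹).reverse, ?_, (List.prod_inv_reverse l).symm, by simp⟩
    intro w hw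
    simp only [List.mem_reverse, List.mem_map] at hw
    obtain ⟨w', hw', rfl⟩ := hw
    rcases h1 w' hw' with h | h
    · exact Or.inr (by simpa using h)
    · exact Or.inl h
  unfold wlen
  congr 1
  ext n
  constructor
  · exact fun h => by simpa using key x⁻¹ n (by simpa using h)
  · exact key x n

end WlenBasics

section GPBasics

variable {V : Type*} {Γ : SimpleGraph V} {G : V → Type*} [∀ v, Group (G v)]

theorem wordProd_nil : wordProd Γ G ([] : List (Σ u, G u)) = 1 := rfl

theorem wordProd_cons (s : Σ u, G u) (l : List (Σ u, G u)) :
    wordProd Γ G (s :: l) = GraphProduct.of Γ G s.2 * wordProd Γ G l := by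
  simp [wordProd]

theorem wordProd_append (l₁ l₂ : List (Σ u, G u)) :
    wordProd Γ G (l₁ ++ l₂) = wordProd Γ G l₁ * wordProd Γ G l₂ := by
  simp [wordProd]

theorem wordProd_singleton (s : Σ u, G u) :
    wordProd Γ G [s] = GraphProduct.of Γ G s.2 := by simp [wordProd]

theorem of_comm {u w : V} (h : Γ.Adj u w) (g : G u) (k : G w) :
    GraphProduct.of Γ G g * GraphProduct.of Γ G k
      = GraphProduct.of Γ G k * GraphProduct.of Γ G g := by
  have hrel : (CoprodI.of g * CoprodI.of k * (CoprodI.of g)⁻¹ * (CoprodI.of k)⁻¹)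
      ∈ Subgroup.normalClosure (graphProductRels Γ G) :=
    Subgroup.subset_normalClosure ⟨u, w, g, k, h, rfl⟩
  have h2 : GraphProduct.of Γ G g * GraphProduct.of Γ G k * (GraphProduct.of Γ G g)⁻¹ *
      (GraphProduct.of Γ G k)⁻¹ = 1 := by
    exact (QuotientGroup.eq_one_iff _).2 hrel
  have h3 : GraphProduct.of Γ G g * GraphProduct.of Γ G k * (GraphProduct.of Γ G g)⁻¹
      = GraphProduct.of Γ G k := mul_inv_eq_one.mp h2
  exact mul_inv_eq_iff_eq_mul.mp h3

theorem of_comm_wordProd {u : V} (g : G u) {m : List (Σ u, G u)}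
    (hm : ∀ z ∈ m, Γ.Adj u z.1) :
    GraphProduct.of Γ G g * wordProd Γ G m = wordProd Γ G m * GraphProduct.of Γ G g := by
  induction m with
  | nil => simp [wordProd]
  | cons x xs ih =>
    rw [wordProd_cons, ← mul_assoc, of_comm (hm x (by simp)) g x.2, mul_assoc,
      ih (fun z hz => hm z (by simp [hz])), ← mul_assoc]

end GPBasics
section GenSet

variable {V : Type*} (Γ : SimpleGraph V) (G : V → Type*) [∀ v, Group (G v)] (X : ∀ v, Set (G v))

/-- Syllable length: the word length of a syllable's image in the graph product. -/
noncomputable def kap (s : Σ u, G u) : ℕ := wlen (genSet Γ G X) (GraphProduct.of Γ G s.2)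

/-- Total syllable cost of a word. -/
noncomputable def cost (l : List (Σ u, G u)) : ℕ := (l.map (kap Γ G X)).sum

variable {Γ G X}

theorem cost_append (l₁ l₂ : List (Σ u, G u)) :
    cost Γ G X (l₁ ++ l₂) = cost Γ G X l₁ + cost Γ G X l₂ := by simp [cost]

theorem cost_cons (s : Σ u, G u) (l : List (Σ u, G u)) :
    cost Γ G X (s :: l) = kap Γ G X s + cost Γ G X l := by simp [cost]

theorem mem_genSet {u : V} {ξ : G u} (hξ : ξ ∈ X u) :
    GraphProduct.of Γ G ξ ∈ genSet Γ G X :=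
  Set.mem_iUnion.2 ⟨u, ⟨ξ, hξ, rfl⟩⟩

theorem closure_genSet (hgen : ∀ v, Subgroup.closure (X v) = ⊤) :
    Subgroup.closure (genSet Γ G X) = ⊤ := by
  rw [Subgroup.eq_top_iff']
  intro x
  obtain ⟨y, rfl⟩ := QuotientGroup.mk'_surjective (Subgroup.normalClosure (graphProductRels Γ G)) x
  induction y using Monoid.CoprodI.induction_on with
  | one => exact (Subgroup.one_mem _ : (1 : GraphProduct Γ G) ∈ _)
  | of i m =>
    have hm : m ∈ Subgroup.closure (X i) := by rw [hgen i]; trivial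
    have h2 : GraphProduct.of Γ G m ∈ (Subgroup.closure (X i)).map (GraphProduct.of Γ G) :=
      Subgroup.mem_map_of_mem _ hm
    rw [MonoidHom.map_closure] at h2
    exact Subgroup.closure_mono
      (Set.subset_iUnion (fun u => ⇑(GraphProduct.of Γ G (u := u)) '' X u) i) h2
  | mul x y hx hy =>
    have : QuotientGroup.mk' (Subgroup.normalClosure (graphProductRels Γ G)) (x * y)
        = QuotientGroup.mk' _ x * QuotientGroup.mk' _ y := map_mul _ _ _
    rw [this]
    exact Subgroup.mul_mem _ hx hy

theorem wlen_wordProd_le (hS : Subgroup.closure (genSet Γ G X) = ⊤) (l : List (Σ u, G u)) :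
    wlen (genSet Γ G X) (wordProd Γ G l) ≤ cost Γ G X l := by
  induction l with
  | nil => simp [wordProd_nil, wlen_one_eq_zero, cost]
  | cons s l ih =>
    rw [wordProd_cons, cost_cons]
    exact le_trans (wlen_mul_le hS _ _) (by exact Nat.add_le_add le_rfl ih)

theorem exists_syllables (lw : List (GraphProduct Γ G))
    (hw : ∀ y ∈ lw, y ∈ genSet Γ G X ∨ y⁻¹ ∈ genSet Γ G X) :
    ∃ l : List (Σ u, G u), wordProd Γ G l = lw.prod ∧ cost Γ G X l ≤ lw.length := by
  induction lw with
  | nil => exact ⟨[], by simp [wordProd_nil], by simp [cost]⟩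
  | cons y lw ih =>
    obtain ⟨l', hl1, hl2⟩ := ih (fun z hz => hw z (by simp [hz]))
    rcases hw y (by simp) with h | h
    · obtain ⟨Su, ⟨u, rfl⟩, ξ, hξ, hy⟩ := h
      refine ⟨⟨u, ξ⟩ :: l', ?_, ?_⟩
      · rw [wordProd_cons, hl1, List.prod_cons, hy]
      · rw [cost_cons]
        have : kap Γ G X (⟨u, ξ⟩ : Σ u, G u) ≤ 1 := by
          have := wlen_le (S := genSet Γ G X) (x := GraphProduct.of Γ G ξ) (l := [y])
            (by intro z hz; simp at hz; subst hz; exact Or.inl (hy ▸ mem_genSet hξ))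
            (by simp [hy])
          simpa [kap] using this
        simp only [List.length_cons]
        omega
    · obtain ⟨Su, ⟨u, rfl⟩, ξ, hξ, hy⟩ := h
      refine ⟨⟨u, ξ⁻¹⟩ :: l', ?_, ?_⟩
      · rw [wordProd_cons, hl1, List.prod_cons]
        congr 1
        have : GraphProduct.of Γ G ξ = y⁻¹ := hy
        rw [map_inv, this, inv_inv]
      · rw [cost_cons]
        have : kap Γ G X (⟨u, ξ⁻¹⟩ : Σ u, G u) ≤ 1 := by
          have := wlen_le (S := genSet Γ G X) (x := GraphProduct.of Γ G ξ⁻¹) (l := [y])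
            (by intro z hz; simp at hz; subst hz; exact Or.inr (hy ▸ mem_genSet hξ))
            (by
              have : GraphProduct.of Γ G ξ = y⁻¹ := hy
              simp [map_inv, this])
          simpa [kap] using this
        simp only [List.length_cons]
        omega

end GenSet
section ListHelpers

variable {α : Type*}

theorem locate_mem {A B Y Z : List α} {y : α} (h : A ++ B = Y ++ y :: Z) :
    (∃ A₂, A = Y ++ y :: A₂ ∧ Z = A₂ ++ B) ∨ (∃ B₁, Y = A ++ B₁ ∧ B = B₁ ++ y :: Z) := by
  rcases List.append_eq_append_iff.1 h with ⟨w, hw1, hw2⟩ | ⟨w, hw1, hw2⟩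
  · exact Or.inr ⟨w, hw1, hw2⟩
  · match w, hw2 with
    | [], hw2 => exact Or.inr ⟨[], by simp [hw1], by simpa using hw2.symm⟩
    | c :: cs, hw2 =>
      obtain ⟨rfl, rfl⟩ : c = y ∧ Z = cs ++ B :=
        ⟨((List.cons_eq_cons.1 hw2).1).symm ▸ rfl, (List.cons_eq_cons.1 hw2).2⟩
      exact Or.inl ⟨cs, by rw [hw1], rfl⟩

theorem getElem_mid (A : List α) (x : α) (R : List α) (h : A.length < (A ++ x :: R).length) :
    (A ++ x :: R)[A.length] = x := by
  induction A with
  | nil => simp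
  | cons a A ih => simpa using ih (by simp)

theorem getElem_before_mem {A R : List α} {k : ℕ} (hk : k < A.length)
    (h : k < (A ++ R).length) : (A ++ R)[k] ∈ A := by
  rw [List.getElem_append_left hk]
  exact List.getElem_mem hk

theorem getElem_between_mem (A B C : List α) (x y : α) {k : ℕ}
    (h1 : A.length < k) (h2 : k < A.length + 1 + B.length)
    (hk : k < (A ++ x :: (B ++ y :: C)).length) : (A ++ x :: (B ++ y :: C))[k] ∈ B := by
  induction A generalizing k with
  | nil =>
    obtain ⟨k', rfl⟩ : ∃ k', k = k' + 1 := ⟨k - 1, by omega⟩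
    simp only [List.nil_append, List.getElem_cons_succ]
    have hk' : k' < B.length := by simp only [List.length_nil] at h2; omega
    rw [List.getElem_append_left hk']
    exact List.getElem_mem hk'
  | cons a A ih =>
    obtain ⟨k', rfl⟩ : ∃ k', k = k' + 1 := ⟨k - 1, by omega⟩
    simp only [List.cons_append, List.getElem_cons_succ]
    exact ih (by simp only [List.length_cons] at h1; omega)
      (by simp only [List.length_cons] at h2; omega)
      (by simp only [List.cons_append, List.length_cons] at hk; omega)

theorem getElem_after_mem (A B C : List α) (x y : α) {k : ℕ}
    (h1 : A.length + 1 + B.length < k)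
    (hk : k < (A ++ x :: (B ++ y :: C)).length) : (A ++ x :: (B ++ y :: C))[k] ∈ C := by
  have hassoc : A ++ x :: (B ++ y :: C) = (A ++ x :: B ++ [y]) ++ C := by simp
  have hlen : (A ++ x :: B ++ [y]).length = A.length + 1 + B.length + 1 := by simp; omega
  rw [List.getElem_of_eq hassoc hk, List.getElem_append_right (by omega)]
  exact List.getElem_mem _

theorem exists_two_split (l : List α) {i j : ℕ} (hij : i < j) (hj : j < l.length) :
    ∃ (A B C : List α), l = A ++ l[i]'(lt_trans hij hj) :: (B ++ l[j] :: C) ∧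
      A.length = i ∧ B.length = j - i - 1 ∧
      (∀ z ∈ A, ∃ (k : ℕ) (hk : k < l.length), k < i ∧ l[k] = z) ∧
      (∀ z ∈ B, ∃ (k : ℕ) (hk : k < l.length), i < k ∧ k < j ∧ l[k] = z) ∧
      (∀ z ∈ C, ∃ (k : ℕ) (hk : k < l.length), j < k ∧ l[k] = z) := by
  have hi : i < l.length := lt_trans hij hj
  refine ⟨l.take i, (l.drop (i+1)).take (j - i - 1), l.drop (j+1), ?_, ?_, ?_, ?_, ?_, ?_⟩
  · conv_lhs => rw [← List.take_append_drop i l, List.drop_eq_getElem_cons hi]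
    congr 2
    conv_lhs => rw [← List.take_append_drop (j - i - 1) (l.drop (i+1))]
    congr 1
    rw [List.drop_drop]
    have hji : i + 1 + (j - i - 1) = j := by omega
    rw [hji, List.drop_eq_getElem_cons hj]
  · simp; omega
  · simp; omega
  · intro z hz
    rw [List.mem_iff_getElem] at hz
    obtain ⟨k, hk, hkz⟩ := hz
    have hk' : k < i := by simp only [List.length_take] at hk; omega
    exact ⟨k, by omega, hk', by rw [← hkz, List.getElem_take]⟩
  · intro z hz
    rw [List.mem_iff_getElem] at hz
    obtain ⟨k, hk, hkz⟩ := hz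
    have hk1 : k < j - i - 1 := by
      simp only [List.length_take, List.length_drop] at hk; omega
    refine ⟨i + 1 + k, by omega, by omega, by omega, ?_⟩
    rw [← hkz, List.getElem_take, List.getElem_drop]
  · intro z hz
    rw [List.mem_iff_getElem] at hz
    obtain ⟨k, hk, hkz⟩ := hz
    have hk1 : k < l.length - (j+1) := by simp only [List.length_drop] at hk; omega
    refine ⟨j + 1 + k, by omega, by omega, ?_⟩
    rw [← hkz, List.getElem_drop]

end ListHelpers

section RedIff

variable {V : Type*} {Γ : SimpleGraph V} {G : V → Type*} [∀ v, Group (G v)]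

/-- List-level version of graphical reducedness. -/
def RedL (Γ : SimpleGraph V) (G : V → Type*) [∀ v, Group (G v)] (l : List (Σ u, G u)) : Prop :=
  (∀ s ∈ l, s.2 ≠ (1 : G s.1)) ∧
  ∀ (A : List (Σ u, G u)) (x : Σ u, G u) (B : List (Σ u, G u)) (y : Σ u, G u)
    (C : List (Σ u, G u)), l = A ++ x :: (B ++ y :: C) → x.1 = y.1 →
    ∃ z ∈ B, ¬ Γ.Adj x.1 z.1

/-- List-level version of the existence of a strippable pair. -/
def IsStrip (Γ : SimpleGraph V) (G : V → Type*) [∀ v, Group (G v)] (l : List (Σ u, G u)) : Prop :=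
  ∃ (A : List (Σ u, G u)) (x : Σ u, G u) (B : List (Σ u, G u)) (y : Σ u, G u)
    (C : List (Σ u, G u)), l = A ++ x :: (B ++ y :: C) ∧ x.1 = y.1 ∧
    (∀ z ∈ A, Γ.Adj x.1 z.1) ∧ (∀ z ∈ C, Γ.Adj y.1 z.1)

theorem getElem_decomp_facts {l A B C : List (Σ u, G u)} {x y : Σ u, G u}
    (hdec : l = A ++ x :: (B ++ y :: C)) :
    ∃ (hi : A.length < l.length) (hj : A.length + 1 + B.length < l.length),
      l[A.length] = x ∧ l[A.length + 1 + B.length] = y := by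
  have hlen : l.length = A.length + 1 + B.length + 1 + C.length := by rw [hdec]; simp; omega
  have hi : A.length < l.length := by omega
  have hj : A.length + 1 + B.length < l.length := by omega
  refine ⟨hi, hj, ?_, ?_⟩
  · rw [List.getElem_of_eq hdec hi]
    exact getElem_mid A x _ (hdec ▸ hi)
  · have hassoc : l = (A ++ x :: B) ++ y :: C := by rw [hdec]; simp
    rw [List.getElem_of_eq hassoc hj]
    have hlen2 : (A ++ x :: B).length = A.length + 1 + B.length := by simp; omega
    have := getElem_mid (A ++ x :: B) y C (by rw [← hassoc, hlen2]; exact hj)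
    simpa only [hlen2] using this

theorem graphicallyReduced_iff_redL (l : List (Σ u, G u)) :
    GraphicallyReduced Γ G l ↔ RedL Γ G l := by
  constructor
  · rintro ⟨h1, h2⟩
    refine ⟨h1, ?_⟩
    rintro A x B y C hdec hxy
    obtain ⟨hi, hj, hgx, hgy⟩ := getElem_decomp_facts hdec
    obtain ⟨k, hk, h3, h4, h5⟩ := h2 A.length (A.length + 1 + B.length) hi hj (by omega)
      (by simp only [List.get_eq_getElem]; rw [hgx, hgy, hxy])
    refine ⟨l[k], ?_, ?_⟩
    · rw [List.getElem_of_eq hdec hk]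
      exact getElem_between_mem A B C x y h3 h4 (hdec ▸ hk)
    · simp only [List.get_eq_getElem] at h5
      rwa [hgx] at h5
  · rintro ⟨h1, h2⟩
    refine ⟨h1, ?_⟩
    intro i j hi hj hij heq
    obtain ⟨A, B, C, hdec, hA, hB, _, hmemB, _⟩ := exists_two_split l hij hj
    simp only [List.get_eq_getElem] at heq
    obtain ⟨z, hz, hnadj⟩ := h2 A _ B _ C hdec heq
    obtain ⟨k, hk, h3, h4, h5⟩ := hmemB z hz
    exact ⟨k, hk, h3, h4, by simp only [List.get_eq_getElem]; rw [h5]; exact hnadj⟩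

theorem strip_exists_iff_isStrip (l : List (Σ u, G u)) :
    (∃ (i j : ℕ) (hi : i < l.length) (hj : j < l.length), i < j ∧
      (l.get ⟨i, hi⟩).1 = (l.get ⟨j, hj⟩).1 ∧
      (∀ (k : ℕ) (hk : k < l.length), k < i → Γ.Adj (l.get ⟨i, hi⟩).1 (l.get ⟨k, hk⟩).1) ∧
      (∀ (k : ℕ) (hk : k < l.length), j < k → Γ.Adj (l.get ⟨j, hj⟩).1 (l.get ⟨k, hk⟩).1))
    ↔ IsStrip Γ G l := by
  constructor
  · rintro ⟨i, j, hi, hj, hij, heq, hpre, hpost⟩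
    obtain ⟨A, B, C, hdec, hA, hB, hmemA, _, hmemC⟩ := exists_two_split l hij hj
    simp only [List.get_eq_getElem] at heq hpre hpost
    refine ⟨A, _, B, _, C, hdec, heq, ?_, ?_⟩
    · intro z hz
      obtain ⟨k, hk, h3, h5⟩ := hmemA z hz
      rw [← h5]
      exact hpre k hk h3
    · intro z hz
      obtain ⟨k, hk, h3, h5⟩ := hmemC z hz
      rw [← h5]
      exact hpost k hk h3
  · rintro ⟨A, x, B, y, C, hdec, hxy, hadjA, hadjC⟩
    obtain ⟨hi, hj, hgx, hgy⟩ := getElem_decomp_facts hdec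
    refine ⟨A.length, A.length + 1 + B.length, hi, hj, by omega, ?_, ?_, ?_⟩
    · simp only [List.get_eq_getElem]; rw [hgx, hgy, hxy]
    · intro k hk hki
      simp only [List.get_eq_getElem]
      rw [hgx]
      have hmem : l[k] ∈ A := by
        rw [List.getElem_of_eq hdec hk]
        exact getElem_before_mem (by omega) (hdec ▸ hk)
      exact hadjA _ hmem
    · intro k hk hkj
      simp only [List.get_eq_getElem]
      rw [hgy]
      have hmem : l[k] ∈ C := by
        rw [List.getElem_of_eq hdec hk]
        exact getElem_after_mem A B C x y (by omega) (hdec ▸ hk)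
      exact hadjC _ hmem

theorem graphCyclicallyReduced_iff (l : List (Σ u, G u)) :
    GraphCyclicallyReduced Γ G l ↔ RedL Γ G l ∧ ¬ IsStrip Γ G l := by
  rw [GraphCyclicallyReduced, graphicallyReduced_iff_redL, strip_exists_iff_isStrip]

end RedIff
section Surgery

variable {α : Type*}

theorem locate3 {D₁ D₂ D₃ Y₁ Z₁ : List α} {y : α} (h : D₁ ++ (D₂ ++ D₃) = Y₁ ++ y :: Z₁) :
    (∃ A B, D₁ = A ++ y :: B ∧ Y₁ = A ∧ Z₁ = B ++ (D₂ ++ D₃)) ∨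
    (∃ A B, D₂ = A ++ y :: B ∧ Y₁ = D₁ ++ A ∧ Z₁ = B ++ D₃) ∨
    (∃ A B, D₃ = A ++ y :: B ∧ Y₁ = D₁ ++ (D₂ ++ A) ∧ Z₁ = B) := by
  rcases locate_mem h with ⟨A₂, h1, h2⟩ | ⟨B₁, h1, h2⟩
  · exact Or.inl ⟨Y₁, A₂, h1, rfl, h2⟩
  · rcases locate_mem h2 with ⟨A₂, h3, h4⟩ | ⟨B₂, h3, h4⟩
    · exact Or.inr (Or.inl ⟨B₁, A₂, h3, h1, h4⟩)
    · exact Or.inr (Or.inr ⟨B₂, Z₁, h4, by rw [h1, h3], rfl⟩)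

theorem locate_last {E Y₁ Z₁ : List α} {β y : α} (h : E ++ [β] = Y₁ ++ y :: Z₁) :
    (Y₁ = E ∧ y = β ∧ Z₁ = []) ∨ (∃ Z', Z₁ = Z' ++ [β] ∧ E = Y₁ ++ y :: Z') := by
  rcases locate_mem h with ⟨A₂, h1, h2⟩ | ⟨B₁, h1, h2⟩
  · exact Or.inr ⟨A₂, h2, h1⟩
  · match B₁, h2 with
    | [], h2 =>
      obtain ⟨h3, h4⟩ := List.cons_eq_cons.1 h2
      exact Or.inl ⟨by simpa using h1, h3.symm, h4.symm⟩
    | c :: cs, h2 =>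
      obtain ⟨-, h4⟩ := List.cons_eq_cons.1 h2
      exact absurd h4.symm (by simp)

theorem master_pair {Y m W A B C : List α} {s t x y : α}
    (h : Y ++ (m ++ W) = A ++ x :: (B ++ y :: C)) :
    ∃ A₀ B₀ C₀, Y ++ s :: (m ++ t :: W) = A₀ ++ x :: (B₀ ++ y :: C₀) ∧
      (∀ z ∈ B₀, z ∈ B ∨ ((z = s ∨ z = t) ∧ (x ∈ Y ∨ y ∈ W))) := by
  rcases locate3 h with ⟨A₁, Yb, hY, hA, hZ⟩ | ⟨A₁, mb, hm, hA, hZ⟩ | ⟨A₁, Wb, hW, hA, hZ⟩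
  · -- x inside Y
    rcases locate3 (D₁ := Yb) (D₂ := m) (D₃ := W) hZ.symm with
      ⟨B₁, Bb, hYb, hB, hC⟩ | ⟨B₁, mb, hm2, hB, hC⟩ | ⟨B₁, Cb, hW2, hB, hC⟩
    · refine ⟨A₁, B₁, Bb ++ s :: (m ++ t :: W), ?_, fun z hz => Or.inl (hB ▸ hz)⟩
      rw [hY, hYb]; simp
    · refine ⟨A₁, Yb ++ s :: B₁, mb ++ t :: W, ?_, ?_⟩
      · rw [hY, hm2]; simp
      · intro z hz
        have hx : x ∈ Y := by rw [hY]; simp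
        simp only [List.mem_append, List.mem_cons] at hz
        rcases hz with h' | h' | h'
        · exact Or.inl (by rw [hB]; simp [h'])
        · exact Or.inr ⟨Or.inl h', Or.inl hx⟩
        · exact Or.inl (by rw [hB]; simp [h'])
    · refine ⟨A₁, Yb ++ s :: (m ++ t :: B₁), Cb, ?_, ?_⟩
      · rw [hY, hW2]; simp
      · intro z hz
        have hx : x ∈ Y := by rw [hY]; simp
        simp only [List.mem_append, List.mem_cons] at hz
        rcases hz with h' | h' | h' | h' | h'
        · exact Or.inl (by rw [hB]; simp [h'])
        · exact Or.inr ⟨Or.inl h', Or.inl hx⟩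
        · exact Or.inl (by rw [hB]; simp [h'])
        · exact Or.inr ⟨Or.inr h', Or.inl hx⟩
        · exact Or.inl (by rw [hB]; simp [h'])
  · -- x inside m
    rcases locate_mem (A := mb) (B := W) hZ.symm with ⟨Bb, hmb, hC⟩ | ⟨B₁, hB, hW2⟩
    · refine ⟨Y ++ s :: A₁, B, Bb ++ t :: W, ?_, fun z hz => Or.inl hz⟩
      rw [hm, hmb]; simp
    · refine ⟨Y ++ s :: A₁, mb ++ t :: B₁, C, ?_, ?_⟩
      · rw [hm, hW2]; simp
      · intro z hz
        have hy : y ∈ W := by rw [hW2]; simp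
        simp only [List.mem_append, List.mem_cons] at hz
        rcases hz with h' | h' | h'
        · exact Or.inl (by rw [hB]; simp [h'])
        · exact Or.inr ⟨Or.inr h', Or.inr hy⟩
        · exact Or.inl (by rw [hB]; simp [h'])
  · -- x inside W
    refine ⟨Y ++ s :: (m ++ t :: A₁), B, C, ?_, fun z hz => Or.inl hz⟩
    rw [hW, hZ]; simp

theorem del2 {Y m W Y₁ Z₁ : List α} {s t y : α}
    (h : Y ++ (m ++ W) = Y₁ ++ y :: Z₁) :
    ∃ Y₀ Z₀, Y ++ s :: (m ++ t :: W) = Y₀ ++ y :: Z₀ ∧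
      (∀ z ∈ Y₀, z ∈ Y₁ ∨ z = s ∨ z = t) ∧ (∀ z ∈ Z₀, z ∈ Z₁ ∨ z = s ∨ z = t) := by
  rcases locate3 h with ⟨A', Yb, hY, hA, hZ⟩ | ⟨A', mb, hm, hA, hZ⟩ | ⟨A', Wb, hW, hA, hZ⟩
  · refine ⟨Y₁, Yb ++ s :: (m ++ t :: W), by rw [hY, hA]; simp, fun z hz => Or.inl hz, ?_⟩
    intro z hz
    simp only [List.mem_append, List.mem_cons] at hz
    rcases hz with h' | h' | h' | h' | h'
    · exact Or.inl (by rw [hZ]; simp [h'])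
    · exact Or.inr (Or.inl h')
    · exact Or.inl (by rw [hZ]; simp [h'])
    · exact Or.inr (Or.inr h')
    · exact Or.inl (by rw [hZ]; simp [h'])
  · refine ⟨Y ++ s :: A', mb ++ t :: W, by rw [hm]; simp, ?_, ?_⟩
    · intro z hz
      simp only [List.mem_append, List.mem_cons] at hz
      rcases hz with h' | h' | h'
      · exact Or.inl (by rw [hA]; simp [h'])
      · exact Or.inr (Or.inl h')
      · exact Or.inl (by rw [hA]; simp [h'])
    · intro z hz
      simp only [List.mem_append, List.mem_cons] at hz
      rcases hz with h' | h' | h'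
      · exact Or.inl (by rw [hZ]; simp [h'])
      · exact Or.inr (Or.inr h')
      · exact Or.inl (by rw [hZ]; simp [h'])
  · refine ⟨Y ++ s :: (m ++ t :: A'), Wb, by rw [hW]; simp, ?_, fun z hz => Or.inl (hZ ▸ hz)⟩
    intro z hz
    simp only [List.mem_append, List.mem_cons] at hz
    rcases hz with h' | h' | h' | h' | h'
    · exact Or.inl (by rw [hA]; simp [h'])
    · exact Or.inr (Or.inl h')
    · exact Or.inl (by rw [hA]; simp [h'])
    · exact Or.inr (Or.inr h')
    · exact Or.inl (by rw [hA]; simp [h'])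

end Surgery
section Mirror

variable {V : Type*} {Γ : SimpleGraph V} {G : V → Type*} [∀ v, Group (G v)]

/-- Inverse of a syllable. -/
def msyl (s : Σ u, G u) : Σ u, G u := ⟨s.1, s.2⁻¹⟩

/-- The "mirror" of a word: reverse it and invert each syllable. -/
def mir (l : List (Σ u, G u)) : List (Σ u, G u) := (l.map msyl).reverse

theorem msyl_fst (s : Σ u, G u) : (msyl s).1 = s.1 := rfl

theorem msyl_msyl (s : Σ u, G u) : msyl (msyl s) = s := by
  cases s; simp [msyl]; exact inv_inv _

theorem mir_nil : mir ([] : List (Σ u, G u)) = [] := rfl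

theorem mir_append (a b : List (Σ u, G u)) : mir (a ++ b) = mir b ++ mir a := by
  simp [mir]

theorem mir_cons (x : Σ u, G u) (l : List (Σ u, G u)) :
    mir (x :: l) = mir l ++ [msyl x] := by simp [mir]

theorem mir_mir (l : List (Σ u, G u)) : mir (mir l) = l := by
  simp [mir, List.map_reverse, List.map_map]
  have : msyl (G := G) ∘ msyl = id := funext msyl_msyl
  simp [this]

theorem mem_mir {z : Σ u, G u} {l : List (Σ u, G u)} : z ∈ mir l ↔ msyl z ∈ l := by
  simp only [mir, List.mem_reverse, List.mem_map]
  constructor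
  · rintro ⟨w, hw, rfl⟩
    rwa [msyl_msyl]
  · intro h
    exact ⟨msyl z, h, msyl_msyl z⟩

theorem wordProd_mir (l : List (Σ u, G u)) :
    wordProd Γ G (mir l) = (wordProd Γ G l)⁻¹ := by
  induction l with
  | nil => simp [mir_nil, wordProd_nil]
  | cons x l ih =>
    rw [mir_cons, wordProd_append, wordProd_cons, wordProd_nil, ih, wordProd_cons]
    rw [mul_inv_rev, mul_one]
    congr 1

theorem kap_msyl {X : ∀ v, Set (G v)} (s : Σ u, G u) :
    kap Γ G X (msyl s) = kap Γ G X s := by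
  show wlen _ (GraphProduct.of Γ G (s.2⁻¹)) = _
  rw [map_inv, wlen_inv]
  rfl

theorem cost_mir {X : ∀ v, Set (G v)} (l : List (Σ u, G u)) :
    cost Γ G X (mir l) = cost Γ G X l := by
  induction l with
  | nil => simp [mir_nil]
  | cons x l ih =>
    rw [mir_cons, cost_append, cost_cons, ih]
    simp [cost, kap_msyl]
    omega

theorem redL_mir {l : List (Σ u, G u)} (h : RedL Γ G l) : RedL Γ G (mir l) := by
  obtain ⟨h1, h2⟩ := h
  constructor
  · intro z hz
    have := h1 (msyl z) (mem_mir.1 hz)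
    intro hcon
    apply this
    show (msyl z).2 = 1
    cases z with
    | mk zv zg => simp [msyl] at hcon ⊢; simp [hcon]; rfl
  · intro A x B y C hdec hxy
    have hl : l = mir C ++ msyl y :: (mir B ++ msyl x :: mir A) := by
      have := congrArg mir hdec
      rw [mir_mir] at this
      rw [this, mir_append, mir_cons, mir_append, mir_cons]
      simp
    obtain ⟨z, hz, hnadj⟩ := h2 (mir C) (msyl y) (mir B) (msyl x) (mir A) hl (by
      show y.1 = x.1; exact hxy.symm)
    refine ⟨msyl z, ?_, ?_⟩
    · rw [← mir_mir B]
      exact mem_mir.2 (by rwa [msyl_msyl])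
    · show ¬ Γ.Adj x.1 (msyl z).1
      rw [msyl_fst]
      have : (msyl y).1 = y.1 := rfl
      rw [this] at hnadj
      rwa [hxy]

theorem isStrip_of_mir {l : List (Σ u, G u)} (h : IsStrip Γ G (mir l)) : IsStrip Γ G l := by
  obtain ⟨A, x, B, y, C, hdec, hxy, hadjA, hadjC⟩ := h
  refine ⟨mir C, msyl y, mir B, msyl x, mir A, ?_, hxy.symm, ?_, ?_⟩
  · have := congrArg mir hdec
    rw [mir_mir] at this
    rw [this, mir_append, mir_cons, mir_append, mir_cons]
    simp
  · intro z hz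
    have := hadjC (msyl z) (mem_mir.1 hz)
    have h' : Γ.Adj y.1 z.1 := this
    exact h'
  · intro z hz
    have := hadjA (msyl z) (mem_mir.1 hz)
    have h' : Γ.Adj x.1 z.1 := this
    exact h'

theorem cyclicallyReduced_mir {l : List (Σ u, G u)} (h : RedL Γ G l ∧ ¬ IsStrip Γ G l) :
    GraphCyclicallyReduced Γ G (mir l) := by
  rw [graphCyclicallyReduced_iff]
  exact ⟨redL_mir h.1, fun hs => h.2 (isStrip_of_mir hs)⟩

end Mirror
section StripStep

variable {V : Type*} {Γ : SimpleGraph V} {G : V → Type*} [∀ v, Group (G v)]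

/-- Head-burnt invariant: every syllable in `H` has, for each later syllable in the same
vertex group, a further syllable non-adjacent to it. -/
def InvHP (Γ : SimpleGraph V) (G : V → Type*) [∀ v, Group (G v)]
    (H F T : List (Σ u, G u)) : Prop :=
  ∀ H₁ (b : Σ u, G u) H₂, H = H₁ ++ b :: H₂ →
    ∀ Y₁ (y : Σ u, G u) Z₁, H₂ ++ (F ++ T) = Y₁ ++ y :: Z₁ → y.1 = b.1 →
      ∃ z ∈ Z₁, ¬ Γ.Adj b.1 z.1

/-- Tail-burnt invariant. -/
def InvTP (Γ : SimpleGraph V) (G : V → Type*) [∀ v, Group (G v)]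
    (H F T : List (Σ u, G u)) : Prop :=
  ∀ T₁ (b : Σ u, G u) T₂, T = T₁ ++ b :: T₂ →
    ∀ Y₁ (y : Σ u, G u) Z₁, H ++ (F ++ T₁) = Y₁ ++ y :: Z₁ → y.1 = b.1 →
      ∃ z ∈ Y₁, ¬ Γ.Adj b.1 z.1

variable {Y F₂ W : List (Σ u, G u)} {sv : V} {sg tg : G sv}

theorem stripRed
    (hred : RedL Γ G (Y ++ ⟨sv,sg⟩ :: (F₂ ++ ⟨sv,tg⟩ :: W)))
    (hY : ∀ z ∈ Y, Γ.Adj sv z.1) (hW : ∀ z ∈ W, Γ.Adj sv z.1) :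
    RedL Γ G (Y ++ (F₂ ++ W)) := by
  constructor
  · intro z hz
    apply hred.1
    simp only [List.mem_append, List.mem_cons] at hz ⊢
    tauto
  · intro A x B y C hdec hxy
    obtain ⟨A₀, B₀, C₀, hdec₀, hmem⟩ :=
      master_pair (s := (⟨sv,sg⟩ : Σ u, G u)) (t := (⟨sv,tg⟩ : Σ u, G u)) hdec
    obtain ⟨z, hz, hnadj⟩ := hred.2 A₀ x B₀ y C₀ hdec₀ hxy
    rcases hmem z hz with h' | ⟨hst, hor⟩
    · exact ⟨z, h', hnadj⟩
    · exfalso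
      have hz1 : z.1 = sv := by rcases hst with rfl | rfl <;> rfl
      rw [hz1] at hnadj
      rcases hor with hx | hy
      · exact hnadj ((hY x hx).symm)
      · rw [hxy] at hnadj
        exact hnadj ((hW y hy).symm)

theorem stripRedLast
    (hred : RedL Γ G (Y ++ ⟨sv,sg⟩ :: (F₂ ++ ⟨sv,tg⟩ :: W)))
    (hY : ∀ z ∈ Y, Γ.Adj sv z.1) (hW : ∀ z ∈ W, Γ.Adj sv z.1)
    (A : List (Σ u, G u)) (x : Σ u, G u) (Bz : List (Σ u, G u))
    (hdec : Y ++ (F₂ ++ W) = A ++ x :: Bz) (hxv : x.1 = sv) :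
    ∃ z ∈ Bz, ¬ Γ.Adj sv z.1 := by
  rcases locate3 hdec with ⟨A₁, Yb, hYs, hA, hZ⟩ | ⟨A₁, Fb, hFs, hA, hZ⟩ | ⟨A₁, Wb, hWs, hA, hZ⟩
  · exfalso
    have hx : x ∈ Y := by rw [hYs]; simp
    have := hY x hx
    rw [hxv] at this
    exact Γ.irrefl this
  · have hLdec : Y ++ (⟨sv,sg⟩ : Σ u, G u) :: (F₂ ++ (⟨sv,tg⟩ : Σ u, G u) :: W)
        = (Y ++ ⟨sv,sg⟩ :: A₁) ++ x :: (Fb ++ ⟨sv,tg⟩ :: W) := by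
      rw [hFs]; simp
    obtain ⟨z, hz, hnadj⟩ := hred.2 _ x Fb _ _ hLdec (by rw [hxv])
    refine ⟨z, ?_, by rwa [hxv] at hnadj⟩
    rw [hZ]
    simp [hz]
  · exfalso
    have hx : x ∈ W := by rw [hWs]; simp
    have := hW x hx
    rw [hxv] at this
    exact Γ.irrefl this

theorem stripBefore
    (hred : RedL Γ G (Y ++ ⟨sv,sg⟩ :: (F₂ ++ ⟨sv,tg⟩ :: W)))
    (hY : ∀ z ∈ Y, Γ.Adj sv z.1) (hW : ∀ z ∈ W, Γ.Adj sv z.1)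
    (A : List (Σ u, G u)) (x : Σ u, G u) (Bz : List (Σ u, G u))
    (hdec : Y ++ (F₂ ++ W) = A ++ x :: Bz) (hxv : x.1 = sv) :
    ∃ z ∈ A, ¬ Γ.Adj sv z.1 := by
  rcases locate3 hdec with ⟨A₁, Yb, hYs, hA, hZ⟩ | ⟨A₁, Fb, hFs, hA, hZ⟩ | ⟨A₁, Wb, hWs, hA, hZ⟩
  · exfalso
    have hx : x ∈ Y := by rw [hYs]; simp
    have := hY x hx
    rw [hxv] at this
    exact Γ.irrefl this
  · have hLdec : Y ++ (⟨sv,sg⟩ : Σ u, G u) :: (F₂ ++ (⟨sv,tg⟩ : Σ u, G u) :: W)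
        = Y ++ (⟨sv,sg⟩ : Σ u, G u) :: (A₁ ++ x :: (Fb ++ (⟨sv,tg⟩ : Σ u, G u) :: W)) := by
      rw [hFs]; simp
    obtain ⟨z, hz, hnadj⟩ := hred.2 Y _ A₁ x _ hLdec (by rw [hxv])
    refine ⟨z, ?_, hnadj⟩
    rw [hA]
    simp [hz]
  · exfalso
    have hx : x ∈ W := by rw [hWs]; simp
    have := hW x hx
    rw [hxv] at this
    exact Γ.irrefl this

theorem stripRedβ
    (hred : RedL Γ G (Y ++ ⟨sv,sg⟩ :: (F₂ ++ ⟨sv,tg⟩ :: W)))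
    (hY : ∀ z ∈ Y, Γ.Adj sv z.1) (hW : ∀ z ∈ W, Γ.Adj sv z.1)
    (hβ : tg * sg ≠ 1) :
    RedL Γ G ((Y ++ (F₂ ++ W)) ++ [⟨sv, tg * sg⟩]) := by
  have hE := stripRed hred hY hW
  constructor
  · intro z hz
    rcases List.mem_append.1 hz with h' | h'
    · exact hE.1 z h'
    · simp only [List.mem_singleton] at h'
      subst h'
      exact hβ
  · intro A x B y C hdec hxy
    have hdec' : (Y ++ (F₂ ++ W)) ++ [(⟨sv, tg * sg⟩ : Σ u, G u)]
        = (A ++ x :: B) ++ y :: C := by rw [hdec]; simp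
    rcases locate_last hdec' with ⟨h1, h2, h3⟩ | ⟨Z', h1, h2⟩
    · -- y is the appended syllable
      subst h2
      obtain ⟨z, hz, hnadj⟩ := stripRedLast hred hY hW A x B h1.symm (by exact hxy)
      exact ⟨z, hz, by rw [show x.1 = sv from hxy]; exact hnadj⟩
    · -- the pair is inside the old list
      have h2' : Y ++ (F₂ ++ W) = A ++ x :: (B ++ y :: Z') := by rw [h2]; simp
      obtain ⟨z, hz, hnadj⟩ := hE.2 A x B y Z' h2' hxy
      exact ⟨z, hz, hnadj⟩

end StripStep
section StripStep2

variable {V : Type*} {Γ : SimpleGraph V} {G : V → Type*} [∀ v, Group (G v)]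

variable {H F₁ F₂ F₃ T : List (Σ u, G u)} {sv : V} {sg tg : G sv}

theorem invHP_strip
    (hY : ∀ z ∈ H ++ F₁, Γ.Adj sv z.1) (hW : ∀ z ∈ F₃ ++ T, Γ.Adj sv z.1)
    (hInvH : InvHP Γ G H (F₁ ++ ⟨sv,sg⟩ :: (F₂ ++ ⟨sv,tg⟩ :: F₃)) T) :
    InvHP Γ G H (F₁ ++ (F₂ ++ F₃)) T := by
  intro H₁ b H₂ hH Y₁ y Z₁ hN hyb
  have hb : Γ.Adj sv b.1 := hY b (by rw [hH]; simp)
  have hN' : (H₂ ++ F₁) ++ (F₂ ++ (F₃ ++ T)) = Y₁ ++ y :: Z₁ := by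
    rw [← hN]; simp
  obtain ⟨Y₀, Z₀, hO, hYv, hZv⟩ :=
    del2 (s := (⟨sv,sg⟩ : Σ u, G u)) (t := (⟨sv,tg⟩ : Σ u, G u)) hN'
  have hO' : H₂ ++ ((F₁ ++ ⟨sv,sg⟩ :: (F₂ ++ ⟨sv,tg⟩ :: F₃)) ++ T) = Y₀ ++ y :: Z₀ := by
    rw [← hO]; simp
  obtain ⟨z, hz, hnadj⟩ := hInvH H₁ b H₂ hH Y₀ y Z₀ hO' hyb
  rcases hZv z hz with h' | h' | h'
  · exact ⟨z, h', hnadj⟩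
  · exact absurd hb.symm (by subst h'; exact hnadj)
  · exact absurd hb.symm (by subst h'; exact hnadj)

theorem invHP_strip_beta
    (hY : ∀ z ∈ H ++ F₁, Γ.Adj sv z.1) (hW : ∀ z ∈ F₃ ++ T, Γ.Adj sv z.1)
    (hInvH : InvHP Γ G H (F₁ ++ ⟨sv,sg⟩ :: (F₂ ++ ⟨sv,tg⟩ :: F₃)) T) :
    InvHP Γ G H (F₁ ++ (F₂ ++ F₃)) (T ++ [⟨sv, tg * sg⟩]) := by
  intro H₁ b H₂ hH Y₁ y Z₁ hN hyb
  have hb : Γ.Adj sv b.1 := hY b (by rw [hH]; simp)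
  have hN' : (H₂ ++ ((F₁ ++ (F₂ ++ F₃)) ++ T)) ++ [(⟨sv, tg * sg⟩ : Σ u, G u)]
      = Y₁ ++ y :: Z₁ := by rw [← hN]; simp
  rcases locate_last hN' with ⟨h1, h2, h3⟩ | ⟨Z', h1, h2⟩
  · exfalso
    have : y.1 = sv := by rw [h2]
    rw [this] at hyb
    rw [← hyb] at hb
    exact Γ.irrefl hb
  · have h2' : H₂ ++ ((F₁ ++ (F₂ ++ F₃)) ++ T) = Y₁ ++ y :: Z' := h2
    obtain ⟨z, hz, hnadj⟩ := invHP_strip hY hW hInvH H₁ b H₂ hH Y₁ y Z' h2' hyb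
    exact ⟨z, by rw [h1]; simp [hz], hnadj⟩

theorem invTP_strip
    (hY : ∀ z ∈ H ++ F₁, Γ.Adj sv z.1) (hW : ∀ z ∈ F₃ ++ T, Γ.Adj sv z.1)
    (hInvT : InvTP Γ G H (F₁ ++ ⟨sv,sg⟩ :: (F₂ ++ ⟨sv,tg⟩ :: F₃)) T) :
    InvTP Γ G H (F₁ ++ (F₂ ++ F₃)) T := by
  intro T₁ b T₂ hT Y₁ y Z₁ hN hyb
  have hb : Γ.Adj sv b.1 := hW b (by rw [hT]; simp)
  have hN' : (H ++ F₁) ++ (F₂ ++ (F₃ ++ T₁)) = Y₁ ++ y :: Z₁ := by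
    rw [← hN]; simp
  obtain ⟨Y₀, Z₀, hO, hYv, hZv⟩ :=
    del2 (s := (⟨sv,sg⟩ : Σ u, G u)) (t := (⟨sv,tg⟩ : Σ u, G u)) hN'
  have hO' : H ++ ((F₁ ++ ⟨sv,sg⟩ :: (F₂ ++ ⟨sv,tg⟩ :: F₃)) ++ T₁) = Y₀ ++ y :: Z₀ := by
    rw [← hO]; simp
  obtain ⟨z, hz, hnadj⟩ := hInvT T₁ b T₂ hT Y₀ y Z₀ hO' hyb
  rcases hYv z hz with h' | h' | h'
  · exact ⟨z, h', hnadj⟩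
  · exact absurd hb.symm (by subst h'; exact hnadj)
  · exact absurd hb.symm (by subst h'; exact hnadj)

theorem invTP_strip_beta
    (hred : RedL Γ G ((H ++ F₁) ++ ⟨sv,sg⟩ :: (F₂ ++ ⟨sv,tg⟩ :: (F₃ ++ T))))
    (hY : ∀ z ∈ H ++ F₁, Γ.Adj sv z.1) (hW : ∀ z ∈ F₃ ++ T, Γ.Adj sv z.1)
    (hInvT : InvTP Γ G H (F₁ ++ ⟨sv,sg⟩ :: (F₂ ++ ⟨sv,tg⟩ :: F₃)) T) :
    InvTP Γ G H (F₁ ++ (F₂ ++ F₃)) (T ++ [⟨sv, tg * sg⟩]) := by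
  intro T₁ b T₂ hT Y₁ y Z₁ hN hyb
  rcases locate_last hT with ⟨h1, h2, h3⟩ | ⟨T₂', h1, h2⟩
  · -- b is the new burnt syllable
    have hN' : (H ++ F₁) ++ (F₂ ++ (F₃ ++ T)) = Y₁ ++ y :: Z₁ := by
      rw [← hN, h1]; simp
    have hyv : y.1 = sv := by rw [hyb, h2]
    obtain ⟨z, hz, hnadj⟩ := stripBefore hred hY hW Y₁ y Z₁ hN' hyv
    refine ⟨z, hz, ?_⟩
    have : b.1 = sv := by rw [h2]
    rwa [this]
  · exact invTP_strip hY hW hInvT T₁ b T₂' h2 Y₁ y Z₁ hN hyb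

theorem invHP_of_invTP_mir {H F T : List (Σ u, G u)} (h : InvTP Γ G H F T) :
    InvHP Γ G (mir T) (mir F) (mir H) := by
  intro H₁ b H₂ hH Y₁ y Z₁ hN hyb
  have hT : T = mir H₂ ++ msyl b :: mir H₁ := by
    have h' := congrArg mir hH
    simp only [mir_mir, mir_append, mir_cons, List.append_assoc, List.singleton_append] at h'
    exact h'
  have hO : H ++ (F ++ mir H₂) = mir Z₁ ++ msyl y :: mir Y₁ := by
    have h' := congrArg mir hN
    simp only [mir_mir, mir_append, mir_cons, List.append_assoc, List.singleton_append] at h'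
    exact h'
  obtain ⟨z, hz, hnadj⟩ := h (mir H₂) (msyl b) (mir H₁) hT (mir Z₁) (msyl y) (mir Y₁)
    hO (by show y.1 = b.1; exact hyb)
  refine ⟨msyl z, mem_mir.1 hz, ?_⟩
  show ¬ Γ.Adj b.1 (msyl z).1
  exact hnadj

theorem invTP_of_invHP_mir {H F T : List (Σ u, G u)} (h : InvHP Γ G H F T) :
    InvTP Γ G (mir T) (mir F) (mir H) := by
  intro T₁ b T₂ hT Y₁ y Z₁ hN hyb
  have hH : H = mir T₂ ++ msyl b :: mir T₁ := by
    have h' := congrArg mir hT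
    simp only [mir_mir, mir_append, mir_cons, List.append_assoc, List.singleton_append] at h'
    exact h'
  have hO : mir T₁ ++ (F ++ T) = mir Z₁ ++ msyl y :: mir Y₁ := by
    have h' := congrArg mir hN
    simp only [mir_mir, mir_append, mir_cons, List.append_assoc, List.singleton_append] at h'
    exact h'
  obtain ⟨z, hz, hnadj⟩ := h (mir T₂) (msyl b) (mir T₁) hH (mir Z₁) (msyl y) (mir Y₁)
    hO (by show y.1 = b.1; exact hyb)
  refine ⟨msyl z, mem_mir.1 hz, ?_⟩
  show ¬ Γ.Adj b.1 (msyl z).1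
  exact hnadj

theorem strip_wordProd
    (hY : ∀ z ∈ Y, Γ.Adj sv z.1) (hW : ∀ z ∈ W, Γ.Adj sv z.1) :
    wordProd Γ G (Y ++ (⟨sv,sg⟩ : Σ u, G u) :: (F₂ ++ (⟨sv,tg⟩ : Σ u, G u) :: W))
      = GraphProduct.of Γ G sg * wordProd Γ G (Y ++ (F₂ ++ W)) * GraphProduct.of Γ G tg := by
  have hcs : GraphProduct.of Γ G sg * wordProd Γ G Y
      = wordProd Γ G Y * GraphProduct.of Γ G sg := of_comm_wordProd sg hY
  have hct : GraphProduct.of Γ G tg * wordProd Γ G W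
      = wordProd Γ G W * GraphProduct.of Γ G tg := of_comm_wordProd tg hW
  rw [wordProd_append, wordProd_cons, wordProd_append, wordProd_cons,
    wordProd_append, wordProd_append, hct]
  simp only [← mul_assoc]
  rw [← hcs]

end StripStep2
section StripPack

variable {V : Type*} {Γ : SimpleGraph V} {G : V → Type*} [∀ v, Group (G v)]
variable {X : ∀ v, Set (G v)}

theorem strip_step (hS : Subgroup.closure (genSet Γ G X) = ⊤)
    (H F₁ F₂ F₃ T : List (Σ u, G u)) (sv : V) (sg tg : G sv)
    (hred : RedL Γ G ((H ++ F₁) ++ (⟨sv,sg⟩ : Σ u, G u) :: (F₂ ++ (⟨sv,tg⟩ : Σ u, G u) :: (F₃ ++ T))))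
    (hY : ∀ z ∈ H ++ F₁, Γ.Adj sv z.1) (hW : ∀ z ∈ F₃ ++ T, Γ.Adj sv z.1)
    (hInvH : InvHP Γ G H (F₁ ++ ⟨sv,sg⟩ :: (F₂ ++ ⟨sv,tg⟩ :: F₃)) T)
    (hInvT : InvTP Γ G H (F₁ ++ ⟨sv,sg⟩ :: (F₂ ++ ⟨sv,tg⟩ :: F₃)) T)
    (hkap : kap Γ G X ⟨sv,sg⟩ ≤ kap Γ G X ⟨sv,tg⟩) :
    ∃ (F' T' : List (Σ u, G u)),
      RedL Γ G (H ++ (F' ++ T')) ∧ InvHP Γ G H F' T' ∧ InvTP Γ G H F' T' ∧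
      wordProd Γ G ((H ++ F₁) ++ (⟨sv,sg⟩ : Σ u, G u) :: (F₂ ++ (⟨sv,tg⟩ : Σ u, G u) :: (F₃ ++ T)))
        = GraphProduct.of Γ G sg * wordProd Γ G (H ++ (F' ++ T'))
          * (GraphProduct.of Γ G sg)⁻¹ ∧
      cost Γ G X (H ++ (F' ++ T'))
        ≤ cost Γ G X (H ++ ((F₁ ++ ⟨sv,sg⟩ :: (F₂ ++ ⟨sv,tg⟩ :: F₃)) ++ T)) ∧
      2 * kap Γ G X ⟨sv,sg⟩ + cost Γ G X F'
        ≤ cost Γ G X (F₁ ++ ⟨sv,sg⟩ :: (F₂ ++ ⟨sv,tg⟩ :: F₃)) ∧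
      F'.length + 2 = (F₁ ++ (⟨sv,sg⟩ : Σ u, G u) :: (F₂ ++ (⟨sv,tg⟩ : Σ u, G u) :: F₃)).length := by
  have hw := strip_wordProd (Y := H ++ F₁) (F₂ := F₂) (W := F₃ ++ T) (sg := sg) (tg := tg) hY hW
  by_cases hβ : tg * sg = 1
  · -- cancelling strip
    refine ⟨F₁ ++ (F₂ ++ F₃), T, ?_, invHP_strip hY hW hInvH, invTP_strip hY hW hInvT,
      ?_, ?_, ?_, ?_⟩
    · have hsh : (H ++ F₁) ++ (F₂ ++ (F₃ ++ T)) = H ++ ((F₁ ++ (F₂ ++ F₃)) ++ T) := by simp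
      rw [← hsh]
      exact stripRed hred hY hW
    · have htg : tg = sg⁻¹ := eq_inv_of_mul_eq_one_left hβ
      have hsh : (H ++ F₁) ++ (F₂ ++ (F₃ ++ T)) = H ++ ((F₁ ++ (F₂ ++ F₃)) ++ T) := by simp
      rw [hw, ← hsh, htg, map_inv]
    · have hsh : H ++ ((F₁ ++ (F₂ ++ F₃)) ++ T) = (H ++ F₁) ++ (F₂ ++ (F₃ ++ T)) := by simp
      rw [hsh]
      simp only [cost_append, cost_cons]
      omega
    · simp only [cost_append, cost_cons]
      omega
    · simp only [List.length_append, List.length_cons]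
      omega
  · -- non-cancelling strip
    refine ⟨F₁ ++ (F₂ ++ F₃), T ++ [⟨sv, tg * sg⟩], ?_, invHP_strip_beta hY hW hInvH,
      invTP_strip_beta hred hY hW hInvT, ?_, ?_, ?_, ?_⟩
    · have hsh : ((H ++ F₁) ++ (F₂ ++ (F₃ ++ T))) ++ [(⟨sv, tg*sg⟩ : Σ u, G u)]
          = H ++ ((F₁ ++ (F₂ ++ F₃)) ++ (T ++ [⟨sv, tg*sg⟩])) := by simp
      rw [← hsh]
      exact stripRedβ hred hY hW hβ
    · have hsh : H ++ ((F₁ ++ (F₂ ++ F₃)) ++ (T ++ [(⟨sv, tg*sg⟩ : Σ u, G u)]))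
          = ((H ++ F₁) ++ (F₂ ++ (F₃ ++ T))) ++ [(⟨sv, tg*sg⟩ : Σ u, G u)] := by simp
      have h1 : wordProd Γ G (H ++ ((F₁ ++ (F₂ ++ F₃)) ++ (T ++ [(⟨sv, tg*sg⟩ : Σ u, G u)])))
          = wordProd Γ G ((H ++ F₁) ++ (F₂ ++ (F₃ ++ T)))
            * (GraphProduct.of Γ G tg * GraphProduct.of Γ G sg) := by
        rw [hsh, wordProd_append, wordProd_singleton]
        congr 1
        exact map_mul _ _ _
      rw [hw, h1]
      group
    · have hβle : kap Γ G X (⟨sv, tg*sg⟩ : Σ u, G u)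
          ≤ kap Γ G X (⟨sv,tg⟩ : Σ u, G u) + kap Γ G X (⟨sv,sg⟩ : Σ u, G u) := by
        show wlen (genSet Γ G X) (GraphProduct.of Γ G (tg * sg)) ≤ _
        rw [map_mul]
        exact wlen_mul_le hS _ _
      simp only [cost_append, cost_cons] at *
      simp only [cost] at *
      simp at hβle ⊢
      omega
    · simp only [cost_append, cost_cons]
      omega
    · simp only [List.length_append, List.length_cons]
      omega

end StripPack
section Core

variable {V : Type*} {Γ : SimpleGraph V} {G : V → Type*} [∀ v, Group (G v)]
variable {X : ∀ v, Set (G v)}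

theorem mir_length (l : List (Σ u, G u)) : (mir l).length = l.length := by simp [mir]

theorem core (hS : Subgroup.closure (genSet Γ G X) = ⊤) (n : ℕ) :
    ∀ (H F T : List (Σ u, G u)), F.length ≤ n →
    RedL Γ G (H ++ (F ++ T)) → InvHP Γ G H F T → InvTP Γ G H F T →
    ∃ (g : GraphProduct Γ G) (l : List (Σ u, G u)),
      GraphCyclicallyReduced Γ G l ∧
      wordProd Γ G (H ++ (F ++ T)) = g * wordProd Γ G l * g⁻¹ ∧
      wlen (genSet Γ G X) (wordProd Γ G l) ≤ cost Γ G X (H ++ (F ++ T)) ∧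
      2 * wlen (genSet Γ G X) g ≤ cost Γ G X F := by
  induction n using Nat.strong_induction_on with
  | _ n IH =>
    intro H F T hlen hred hInvH hInvT
    by_cases hstrip : IsStrip Γ G (H ++ (F ++ T))
    case neg =>
      refine ⟨1, H ++ (F ++ T), (graphCyclicallyReduced_iff _).2 ⟨hred, hstrip⟩, by group, ?_, ?_⟩
      · exact wlen_wordProd_le hS _
      · rw [wlen_one_eq_zero]
        omega
    case pos =>
      obtain ⟨A, x, B, y, C, hdec, hxy, hadjA, hadjC⟩ := hstrip
      rcases locate3 hdec with ⟨A₁, Hb, hH, hA, hZ⟩ | ⟨F₁, Fb, hF, hA, hZ⟩ |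
        ⟨T₁, Tb, hT, hA, hZ⟩
      · -- x lies in the head-burnt region: contradiction
        exfalso
        obtain ⟨z, hz, hnadj⟩ := hInvH A₁ x Hb (by rw [hH]) B y C hZ.symm hxy.symm
        have := hadjC z hz
        rw [hxy] at hnadj
        exact hnadj this
      · -- x lies in the fresh region
        rcases locate_mem (A := Fb) (B := T) hZ.symm with ⟨F₃, hFb, hC⟩ | ⟨B₁, hB, hT⟩
        · -- y also lies in the fresh region : perform the strip
          -- F = F₁ ++ x :: (B ++ y :: F₃), A = H ++ F₁, C = F₃ ++ T
          obtain ⟨sv, sg⟩ := x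
          obtain ⟨tv, tg⟩ := y
          have hvv : sv = tv := hxy
          subst hvv
          have hFsh : F = F₁ ++ (⟨sv,sg⟩ : Σ u, G u) :: (B ++ (⟨sv,tg⟩ : Σ u, G u) :: F₃) := by
            rw [hF, hFb]
          have hY : ∀ z ∈ H ++ F₁, Γ.Adj sv z.1 := by
            intro z hz
            exact hadjA z (by rw [hA]; exact hz)
          have hW : ∀ z ∈ F₃ ++ T, Γ.Adj sv z.1 := by
            intro z hz
            exact hadjC z (by rw [hC]; exact hz)
          have hredS : RedL Γ G ((H ++ F₁) ++ (⟨sv,sg⟩ : Σ u, G u) ::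
              (B ++ (⟨sv,tg⟩ : Σ u, G u) :: (F₃ ++ T))) := by
            have hsh : H ++ (F ++ T) = (H ++ F₁) ++ (⟨sv,sg⟩ : Σ u, G u) ::
                (B ++ (⟨sv,tg⟩ : Σ u, G u) :: (F₃ ++ T)) := by rw [hFsh]; simp
            rwa [hsh] at hred
          rw [hFsh] at hInvH hInvT hlen
          have hLsh : H ++ (F ++ T) = (H ++ F₁) ++ (⟨sv,sg⟩ : Σ u, G u) ::
              (B ++ (⟨sv,tg⟩ : Σ u, G u) :: (F₃ ++ T)) := by rw [hFsh]; simp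
          by_cases hkk : kap Γ G X (⟨sv,sg⟩ : Σ u, G u) ≤ kap Γ G X (⟨sv,tg⟩ : Σ u, G u)
          · -- conjugate by the first syllable
            obtain ⟨F', T', hred', hInvH', hInvT', hconj, hcost, hcostF, hlen'⟩ :=
              strip_step hS H F₁ B F₃ T sv sg tg hredS hY hW hInvH hInvT hkk
            obtain ⟨g₀, l, hcyc, hconj₀, hb₀, hg₀⟩ := IH F'.length (by omega) H F' T'
              le_rfl hred' hInvH' hInvT'
            refine ⟨GraphProduct.of Γ G sg * g₀, l, hcyc, ?_, ?_, ?_⟩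
            · rw [hLsh, hconj, hconj₀]
              group
            · refine le_trans hb₀ (le_trans hcost ?_)
              rw [hLsh]
              simp only [cost_append, cost_cons]
              omega
            · have h1 : wlen (genSet Γ G X) (GraphProduct.of Γ G sg * g₀)
                  ≤ kap Γ G X (⟨sv,sg⟩ : Σ u, G u) + wlen (genSet Γ G X) g₀ :=
                wlen_mul_le hS _ _
              rw [hFsh]
              omega
          · -- conjugate by the second syllable, via mirroring
            push_neg at hkk
            have hkk' : kap Γ G X (⟨sv, tg⁻¹⟩ : Σ u, G u) ≤ kap Γ G X (⟨sv, sg⁻¹⟩ : Σ u, G u) := by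
              have e1 : kap Γ G X (⟨sv, tg⁻¹⟩ : Σ u, G u) = kap Γ G X (⟨sv,tg⟩ : Σ u, G u) := by
                simpa [msyl] using kap_msyl (Γ := Γ) (X := X) (⟨sv,tg⟩ : Σ u, G u)
              have e2 : kap Γ G X (⟨sv, sg⁻¹⟩ : Σ u, G u) = kap Γ G X (⟨sv,sg⟩ : Σ u, G u) := by
                simpa [msyl] using kap_msyl (Γ := Γ) (X := X) (⟨sv,sg⟩ : Σ u, G u)
              rw [e1, e2]
              omega
            have hmF : mir (F₁ ++ (⟨sv,sg⟩ : Σ u, G u) :: (B ++ (⟨sv,tg⟩ : Σ u, G u) :: F₃))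
                = mir F₃ ++ (⟨sv, tg⁻¹⟩ : Σ u, G u) ::
                  (mir B ++ (⟨sv, sg⁻¹⟩ : Σ u, G u) :: mir F₁) := by
              simp [mir_append, mir_cons, msyl, List.append_assoc, List.singleton_append]
            have hmL : mir (H ++ (F ++ T)) = (mir T ++ mir F₃) ++ (⟨sv, tg⁻¹⟩ : Σ u, G u) ::
                (mir B ++ (⟨sv, sg⁻¹⟩ : Σ u, G u) :: (mir F₁ ++ mir H)) := by
              rw [hFsh]
              simp [mir_append, mir_cons, msyl, List.append_assoc, List.singleton_append]
            have hredM : RedL Γ G ((mir T ++ mir F₃) ++ (⟨sv, tg⁻¹⟩ : Σ u, G u) ::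
                (mir B ++ (⟨sv, sg⁻¹⟩ : Σ u, G u) :: (mir F₁ ++ mir H))) := by
              rw [← hmL]
              exact redL_mir hred
            have hYM : ∀ z ∈ mir T ++ mir F₃, Γ.Adj sv z.1 := by
              intro z hz
              rw [← mir_append] at hz
              have := hW (msyl z) (mem_mir.1 hz)
              exact this
            have hWM : ∀ z ∈ mir F₁ ++ mir H, Γ.Adj sv z.1 := by
              intro z hz
              rw [← mir_append] at hz
              have := hY (msyl z) (mem_mir.1 hz)
              exact this
            have hInvHM : InvHP Γ G (mir T) (mir F₃ ++ (⟨sv, tg⁻¹⟩ : Σ u, G u) ::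
                (mir B ++ (⟨sv, sg⁻¹⟩ : Σ u, G u) :: mir F₁)) (mir H) := by
              rw [← hmF]
              exact invHP_of_invTP_mir hInvT
            have hInvTM : InvTP Γ G (mir T) (mir F₃ ++ (⟨sv, tg⁻¹⟩ : Σ u, G u) ::
                (mir B ++ (⟨sv, sg⁻¹⟩ : Σ u, G u) :: mir F₁)) (mir H) := by
              rw [← hmF]
              exact invTP_of_invHP_mir hInvH
            obtain ⟨F', T', hred', hInvH', hInvT', hconj, hcost, hcostF, hlen'⟩ :=
              strip_step hS (mir T) (mir F₃) (mir B) (mir F₁) (mir H) sv tg⁻¹ sg⁻¹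
                hredM hYM hWM hInvHM hInvTM hkk'
            have hlenF' : F'.length + 2
                = (F₁ ++ (⟨sv,sg⟩ : Σ u, G u) :: (B ++ (⟨sv,tg⟩ : Σ u, G u) :: F₃)).length := by
              simp only [List.length_append, List.length_cons, mir_length] at hlen' ⊢
              omega
            obtain ⟨g₀, l, hcyc, hconj₀, hb₀, hg₀⟩ := IH F'.length (by omega) (mir T) F' T'
              le_rfl hred' hInvH' hInvT'
            refine ⟨GraphProduct.of Γ G tg⁻¹ * g₀, mir l, cyclicallyReduced_mir
              ((graphCyclicallyReduced_iff l).1 hcyc), ?_, ?_, ?_⟩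
            · have hinv : (wordProd Γ G (H ++ (F ++ T)))⁻¹
                  = GraphProduct.of Γ G tg⁻¹ * (g₀ * wordProd Γ G l * g₀⁻¹)
                    * (GraphProduct.of Γ G tg⁻¹)⁻¹ := by
                rw [← wordProd_mir, hmL, hconj, hconj₀]
              have := congrArg Inv.inv hinv
              rw [inv_inv] at this
              rw [this, wordProd_mir]
              group
            · have e1 : wlen (genSet Γ G X) (wordProd Γ G (mir l))
                  = wlen (genSet Γ G X) (wordProd Γ G l) := by
                rw [wordProd_mir, wlen_inv]
              rw [e1]
              refine le_trans hb₀ (le_trans hcost ?_)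
              have e2 : mir T ++ ((mir F₃ ++ (⟨sv, tg⁻¹⟩ : Σ u, G u) ::
                  (mir B ++ (⟨sv, sg⁻¹⟩ : Σ u, G u) :: mir F₁)) ++ mir H)
                  = mir (H ++ (F ++ T)) := by
                rw [hmL]
                simp
              rw [e2, cost_mir]
            · have h1 : wlen (genSet Γ G X) (GraphProduct.of Γ G tg⁻¹ * g₀)
                  ≤ kap Γ G X (⟨sv, tg⁻¹⟩ : Σ u, G u) + wlen (genSet Γ G X) g₀ :=
                wlen_mul_le hS _ _
              have e3 : cost Γ G X (mir F₃ ++ (⟨sv, tg⁻¹⟩ : Σ u, G u) ::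
                  (mir B ++ (⟨sv, sg⁻¹⟩ : Σ u, G u) :: mir F₁))
                  = cost Γ G X F := by
                rw [← hmF, cost_mir, hFsh]
              calc 2 * wlen (genSet Γ G X) (GraphProduct.of Γ G tg⁻¹ * g₀)
                  ≤ 2 * (kap Γ G X (⟨sv, tg⁻¹⟩ : Σ u, G u) + wlen (genSet Γ G X) g₀) := by
                    omega
                _ ≤ 2 * kap Γ G X (⟨sv, tg⁻¹⟩ : Σ u, G u) + cost Γ G X F' := by omega
                _ ≤ cost Γ G X (mir F₃ ++ (⟨sv, tg⁻¹⟩ : Σ u, G u) ::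
                    (mir B ++ (⟨sv, sg⁻¹⟩ : Σ u, G u) :: mir F₁)) := hcostF
                _ = cost Γ G X F := e3
        · -- y lies in the tail-burnt region: contradiction
          exfalso
          obtain ⟨z, hz, hnadj⟩ := hInvT B₁ y C hT A x (Fb ++ B₁)
            (by rw [hA, hF]; simp) hxy
          have := hadjA z hz
          rw [hxy] at this
          exact hnadj this
      · -- x lies in the tail-burnt region: contradiction
        exfalso
        have hTsh : T = (T₁ ++ x :: B) ++ y :: C := by rw [hT, ← hZ]; simp
        obtain ⟨z, hz, hnadj⟩ := hInvT (T₁ ++ x :: B) y C hTsh A x B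
          (by rw [hA]; simp) hxy
        have := hadjA z hz
        rw [hxy] at this
        exact hnadj this

end Core
section Phase1

variable {V : Type*} {Γ : SimpleGraph V} {G : V → Type*} [∀ v, Group (G v)]
variable {X : ∀ v, Set (G v)}

theorem exists_reduced (hS : Subgroup.closure (genSet Γ G X) = ⊤) (n : ℕ) :
    ∀ (l : List (Σ u, G u)), l.length ≤ n →
    ∃ l', RedL Γ G l' ∧ wordProd Γ G l' = wordProd Γ G l ∧ cost Γ G X l' ≤ cost Γ G X l := by
  induction n using Nat.strong_induction_on with
  | _ n IH =>
    intro l hlen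
    by_cases h1 : ∃ s ∈ l, s.2 = (1 : G s.1)
    · obtain ⟨s, hs, hs1⟩ := h1
      obtain ⟨l₁, l₂, rfl⟩ := List.append_of_mem hs
      have hlt : (l₁ ++ l₂).length < n := by
        simp only [List.length_append, List.length_cons] at hlen ⊢
        omega
      obtain ⟨l', hr', hw', hc'⟩ := IH (l₁ ++ l₂).length hlt (l₁ ++ l₂) le_rfl
      refine ⟨l', hr', ?_, ?_⟩
      · rw [hw', wordProd_append, wordProd_append, wordProd_cons]
        have : GraphProduct.of Γ G s.2 = 1 := by rw [hs1]; exact map_one _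
        rw [this, one_mul]
      · refine le_trans hc' ?_
        simp only [cost_append, cost_cons]
        omega
    · push_neg at h1
      by_cases h2 : ∀ (A : List (Σ u, G u)) (x : Σ u, G u) (B : List (Σ u, G u))
          (y : Σ u, G u) (C : List (Σ u, G u)), l = A ++ x :: (B ++ y :: C) → x.1 = y.1 →
          ∃ z ∈ B, ¬ Γ.Adj x.1 z.1
      · exact ⟨l, ⟨h1, h2⟩, rfl, le_rfl⟩
      · push_neg at h2
        obtain ⟨A, x, B, y, C, hdec, hxy, hadjB⟩ := h2
        obtain ⟨sv, sg⟩ := x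
        obtain ⟨tv, tg⟩ := y
        have hvv : sv = tv := hxy
        subst hvv
        have hcomm : GraphProduct.of Γ G sg * wordProd Γ G B
            = wordProd Γ G B * GraphProduct.of Γ G sg :=
          of_comm_wordProd sg (fun z hz => hadjB z hz)
        have hwp : wordProd Γ G (A ++ (B ++ (⟨sv, sg * tg⟩ : Σ u, G u) :: C))
            = wordProd Γ G l := by
          rw [hdec]
          rw [wordProd_append, wordProd_append, wordProd_cons,
            wordProd_append, wordProd_cons, wordProd_append, wordProd_cons]
          have hmm : GraphProduct.of Γ G ((⟨sv, sg * tg⟩ : Σ u, G u).2)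
              = GraphProduct.of Γ G sg * GraphProduct.of Γ G tg := map_mul _ _ _
          rw [hmm]
          simp only [← mul_assoc]
          rw [mul_assoc (wordProd Γ G A), ← hcomm]
          group
        have hlt : (A ++ (B ++ (⟨sv, sg * tg⟩ : Σ u, G u) :: C)).length < n := by
          have := congrArg List.length hdec
          simp only [List.length_append, List.length_cons] at this hlen ⊢
          omega
        obtain ⟨l', hr', hw', hc'⟩ := IH _ hlt (A ++ (B ++ (⟨sv, sg * tg⟩ : Σ u, G u) :: C)) le_rfl
        refine ⟨l', hr', by rw [hw', hwp], ?_⟩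
        refine le_trans hc' ?_
        have hκ : kap Γ G X (⟨sv, sg * tg⟩ : Σ u, G u)
            ≤ kap Γ G X (⟨sv, sg⟩ : Σ u, G u) + kap Γ G X (⟨sv, tg⟩ : Σ u, G u) := by
          show wlen (genSet Γ G X) (GraphProduct.of Γ G (sg * tg)) ≤ _
          rw [map_mul]
          exact wlen_mul_le hS _ _
        rw [hdec]
        simp only [cost_append, cost_cons]
        omega

end Phase1

/-- Quantified conjugation to a graphically cyclically reduced element: every element `a`
of a graph product of finitely generated groups can be written `a = g * b * g⁻¹` with `b`
graphically cyclically reduced, `‖b‖ ≤ ‖a‖` and `‖g‖ ≤ ‖a‖ / 2`. -/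
theorem conjugate_to_graphically_cyclically_reduced_quantified {V : Type*} [Fintype V]
    (Γ : SimpleGraph V) (G : V → Type*) [∀ v, Group (G v)] [∀ v, Nontrivial (G v)]
    (X : ∀ v, Set (G v)) (hfin : ∀ v, (X v).Finite)
    (hgen : ∀ v, Subgroup.closure (X v) = ⊤)
    (a : GraphProduct Γ G) :
    ∃ (g : GraphProduct Γ G) (l : List (Σ u, G u)),
      GraphCyclicallyReduced Γ G l ∧ a = g * wordProd Γ G l * g⁻¹ ∧
      wlen (genSet Γ G X) (wordProd Γ G l) ≤ wlen (genSet Γ G X) a ∧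
      2 * wlen (genSet Γ G X) g ≤ wlen (genSet Γ G X) a := by
  have hS : Subgroup.closure (genSet Γ G X) = ⊤ := closure_genSet hgen
  obtain ⟨lw, hw1, hw2, hw3⟩ := exists_min_word hS a
  obtain ⟨l₀, h01, h02⟩ := exists_syllables lw hw1
  obtain ⟨l₁, hred₁, hwp₁, hc₁⟩ := exists_reduced hS l₀.length l₀ le_rfl
  have hsh : ([] : List (Σ u, G u)) ++ (l₁ ++ ([] : List (Σ u, G u))) = l₁ := by simp
  have hInvH : InvHP Γ G ([] : List (Σ u, G u)) l₁ [] := by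
    intro H₁ b H₂ h
    exact absurd (congrArg List.length h) (by simp)
  have hInvT : InvTP Γ G ([] : List (Σ u, G u)) l₁ [] := by
    intro T₁ b T₂ h
    exact absurd (congrArg List.length h) (by simp)
  obtain ⟨g, l, hcyc, hconj, hb, hg⟩ := core hS l₁.length [] l₁ [] le_rfl
    (by rw [hsh]; exact hred₁) hInvH hInvT
  rw [hsh] at hconj hb
  have ha : wordProd Γ G l₁ = a := by rw [hwp₁, h01, hw2]
  refine ⟨g, l, hcyc, by rw [← ha, hconj], ?_, ?_⟩
  · refine le_trans hb (le_trans hc₁ (le_trans h02 ?_))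
    rw [hw3]
  · refine le_trans hg (le_trans hc₁ (le_trans h02 ?_))
    rw [hw3]
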